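/- Let 0 < λ ≤ Λ and let a, b : (0,1) → ℝ be measurable with λ ≤ a, b ≤ Λ a.e. Write A := 1/a, B := 1/b, γ_A := (∫₀¹ t·A)/(∫₀¹ A), γ_B := (∫₀¹ t·B)/(∫₀¹ B). If A(x)(x - γ_A) = B(x)(x - γ_B) for a.e. x ∈ (0,1) (i.e. u_a' = u_b' a.e., equivalently u_a = u_b), then a = b a.e. on (0,1). In particular, for f = 1 the diffusion coefficient a ∈ 𝒜 is uniquely determined by the solution u_a. -/

import Mathlib

/-!
Since `A, B > 0`, both `γ_A` and `γ_B` are weighted means of `t ∈ (0,1)`, so they lie in `[0,1]`.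
If `γ_A < γ_B`, then on `(γ_A, γ_B)` the function `A(x)(x - γ_A)` is positive while
`B(x)(x - γ_B)` is negative, so they cannot agree a.e.; hence `γ_A = γ_B =: γ`. Off the null set
`{γ}` the factor `x - γ` cancels, leaving `1/a = 1/b`.
-/

open MeasureTheory Real Set

/-- The constant `γ_A = (∫₀¹ t A(t) dt) / (∫₀¹ A(t) dt)`. -/
noncomputable def gammaOf (A : ℝ → ℝ) : ℝ :=
  (∫ t in (0:ℝ)..1, t * A t) / (∫ t in (0:ℝ)..1, A t)

/- If `A` is not integrable, `gammaOf A` is the junk value `_ / 0 = 0`. -/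
lemma gammaOf_mem_Icc {A : ℝ → ℝ} (hA : ∀ᵐ t ∂volume.restrict (Ioc (0:ℝ) 1), 0 ≤ A t) :
    gammaOf A ∈ Icc (0:ℝ) 1 := by
  have htA : ∀ᵐ t ∂volume.restrict (Ioc (0:ℝ) 1), 0 ≤ t * A t ∧ t * A t ≤ A t := by
    filter_upwards [hA, ae_restrict_mem measurableSet_Ioc] with t hAt ht
    exact ⟨mul_nonneg ht.1.le hAt, mul_le_of_le_one_left hAt ht.2⟩
  by_cases hAint : IntegrableOn A (Ioc (0:ℝ) 1)
  · have hmom_le : (∫ t in Ioc (0:ℝ) 1, t * A t) ≤ ∫ t in Ioc (0:ℝ) 1, A t := by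
      refine integral_mono_ae ?_ hAint (htA.mono fun _ h ↦ h.2)
      refine hAint.mono' (continuous_id.aestronglyMeasurable.mul hAint.aestronglyMeasurable) ?_
      filter_upwards [htA] with t ht
      rw [Real.norm_eq_abs, abs_of_nonneg ht.1]
      exact ht.2
    rw [gammaOf, intervalIntegral.integral_of_le zero_le_one,
      intervalIntegral.integral_of_le zero_le_one]
    exact ⟨div_nonneg (integral_nonneg_of_ae (htA.mono fun _ h ↦ h.1)) (integral_nonneg_of_ae hA),
      div_le_one_of_le₀ hmom_le (integral_nonneg_of_ae hA)⟩
  · simp [gammaOf, intervalIntegral.integral_of_le zero_le_one, integral_undef hAint]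

lemma le_of_ae_mul_sub_eq {A B : ℝ → ℝ} {α β : ℝ} (hα : 0 ≤ α) (hβ : β ≤ 1)
    (hA : ∀ᵐ x ∂volume.restrict (Ioo (0:ℝ) 1), 0 < A x)
    (hB : ∀ᵐ x ∂volume.restrict (Ioo (0:ℝ) 1), 0 < B x)
    (h : ∀ᵐ x ∂volume.restrict (Ioo (0:ℝ) 1), A x * (x - α) = B x * (x - β)) :
    β ≤ α := by
  by_contra! hαβ
  have hsub : Ioo α β ⊆ Ioo (0:ℝ) 1 := Ioo_subset_Ioo hα hβ
  have : (ae (volume.restrict (Ioo α β))).NeBot := ae_restrict_neBot.2 (by simpa using hαβ)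
  obtain ⟨x, hx, hAx, hBx, hABx⟩ := ((ae_restrict_mem measurableSet_Ioo).and
    ((ae_restrict_of_ae_restrict_of_subset hsub hA).and
    ((ae_restrict_of_ae_restrict_of_subset hsub hB).and
    (ae_restrict_of_ae_restrict_of_subset hsub h)))).exists
  have hpos : 0 < A x * (x - α) := mul_pos hAx (sub_pos.2 hx.1)
  have hneg : B x * (x - β) < 0 := mul_neg_of_pos_of_neg hBx (sub_neg.2 hx.2)
  linarith

theorem stmt4_general (lam Lam : ℝ) (hlam : 0 < lam)
    (a b : ℝ → ℝ)
    (haB : ∀ᵐ x ∂(volume.restrict (Ioo (0:ℝ) 1)), lam ≤ a x ∧ a x ≤ Lam)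
    (hbB : ∀ᵐ x ∂(volume.restrict (Ioo (0:ℝ) 1)), lam ≤ b x ∧ b x ≤ Lam)
    (heq : ∀ᵐ x ∂(volume.restrict (Ioo (0:ℝ) 1)),
      (1 / a x) * (x - gammaOf (fun t => 1 / a t))
        = (1 / b x) * (x - gammaOf (fun t => 1 / b t))) :
    ∀ᵐ x ∂(volume.restrict (Ioo (0:ℝ) 1)), a x = b x := by
  have hApos : ∀ᵐ x ∂volume.restrict (Ioo (0:ℝ) 1), 0 < 1 / a x :=
    haB.mono fun x hx ↦ one_div_pos.2 (hlam.trans_le hx.1)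
  have hBpos : ∀ᵐ x ∂volume.restrict (Ioo (0:ℝ) 1), 0 < 1 / b x :=
    hbB.mono fun x hx ↦ one_div_pos.2 (hlam.trans_le hx.1)
  have hIoo : volume.restrict (Ioo (0:ℝ) 1) = volume.restrict (Ioc (0:ℝ) 1) :=
    Measure.restrict_congr_set Ioo_ae_eq_Ioc
  have hγA := gammaOf_mem_Icc (hIoo ▸ hApos.mono fun _ h ↦ h.le)
  have hγB := gammaOf_mem_Icc (hIoo ▸ hBpos.mono fun _ h ↦ h.le)
  have hγ : gammaOf (fun t => 1 / a t) = gammaOf (fun t => 1 / b t) :=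
    le_antisymm (le_of_ae_mul_sub_eq hγB.1 hγA.2 hBpos hApos (heq.mono fun _ h ↦ h.symm))
      (le_of_ae_mul_sub_eq hγA.1 hγB.2 hApos hBpos heq)
  filter_upwards [heq, Measure.ae_ne _ (gammaOf fun t => 1 / a t)] with x hx hxγ
  rw [← hγ] at hx
  simpa [one_div] using mul_right_cancel₀ (sub_ne_zero.2 hxγ) hx

/-- Uniqueness of the diffusion coefficient in one dimension with right side `f = 1`:
if `λ ≤ a, b ≤ Λ` a.e. on `(0,1)` and the derivatives `u_a' = -A(x)(x-γ_A)` and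
`u_b' = -B(x)(x-γ_B)` of the corresponding solutions coincide a.e. (equivalently
`u_a = u_b`), then `a = b` a.e. on `(0,1)`. -/
theorem stmt4 (lam Lam : ℝ) (hlam : 0 < lam) (hlL : lam ≤ Lam)
    (a b : ℝ → ℝ) (ha : Measurable a) (hb : Measurable b)
    (haB : ∀ᵐ x ∂(volume.restrict (Ioo (0:ℝ) 1)), lam ≤ a x ∧ a x ≤ Lam)
    (hbB : ∀ᵐ x ∂(volume.restrict (Ioo (0:ℝ) 1)), lam ≤ b x ∧ b x ≤ Lam)
    (heq : ∀ᵐ x ∂(volume.restrict (Ioo (0:ℝ) 1)),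
      (1 / a x) * (x - gammaOf (fun t => 1 / a t))
        = (1 / b x) * (x - gammaOf (fun t => 1 / b t))) :
    ∀ᵐ x ∂(volume.restrict (Ioo (0:ℝ) 1)), a x = b x :=
  stmt4_general lam Lam hlam a b haB hbB heq
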